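/- arXiv:2402.13274 — 2 statements merged into one kernel-verified Lean document; each statement's English description precedes it below -/
import Mathlib

section
/- Let β > 0, c > 0, λ = sqrt(β² + cβ) and k = β − λ. Let φ : Ω → ℝ be smooth with −Δφ = βφ on Ω. Define u(x,t) = ((c+k)/λ)·e^{−λt}·φ(x) and m(x,t) = e^{−λt}·φ(x). Then −∂_t u − Δu = c·m and ∂_t m − Δm − Δu = 0 on Ω × (0,T). -/
open MeasureTheory Real Set

/-- Laplacian as the sum of second directional derivatives along coordinate axes. -/
noncomputable def lap {n : ℕ} (φ : EuclideanSpace ℝ (Fin n) → ℝ)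
    (x : EuclideanSpace ℝ (Fin n)) : ℝ :=
  ∑ i : Fin n, iteratedDeriv 2 (fun s : ℝ => φ (x + s • EuclideanSpace.single i (1 : ℝ))) 0

private lemma line_smooth {n : ℕ} {φ : EuclideanSpace ℝ (Fin n) → ℝ} (hφ : ContDiff ℝ (⊤ : ℕ∞) φ)
    (x : EuclideanSpace ℝ (Fin n)) (v : EuclideanSpace ℝ (Fin n)) :
    ContDiff ℝ (⊤ : ℕ∞) (fun s : ℝ => φ (x + s • v)) :=
  hφ.comp ((contDiff_const.add (contDiff_id.smul contDiff_const)))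

private lemma lap_const_mul {n : ℕ} (a : ℝ) (φ : EuclideanSpace ℝ (Fin n) → ℝ)
    (hφ : ContDiff ℝ (⊤ : ℕ∞) φ) (x : EuclideanSpace ℝ (Fin n)) :
    lap (fun y => a * φ y) x = a * lap φ x := by
  unfold lap
  rw [Finset.mul_sum]
  refine Finset.sum_congr rfl fun i _ => ?_
  have h : ContDiff ℝ (2 : ℕ) (fun s : ℝ => φ (x + s • EuclideanSpace.single i (1 : ℝ))) :=
    (line_smooth hφ x _).of_le (by exact WithTop.coe_le_coe.mpr le_top)
  have key := iteratedDerivWithin_const_smul (Set.mem_univ (0 : ℝ)) uniqueDiffOn_univ a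
    h.contDiffAt.contDiffWithinAt
  simpa [iteratedDerivWithin_univ, Pi.smul_def, smul_eq_mul] using key

theorem stmt1 {n : ℕ} (Ω : Set (EuclideanSpace ℝ (Fin n))) (T β c lam k : ℝ)
    (hβ : 0 < β) (hc : 0 < c) (hT : 0 < T)
    (hlam : lam = Real.sqrt (β ^ 2 + c * β)) (hk : k = β - lam)
    (φ : EuclideanSpace ℝ (Fin n) → ℝ) (hφ : ContDiff ℝ (⊤ : ℕ∞) φ)
    (heig : ∀ x ∈ Ω, -lap φ x = β * φ x)
    (u m : EuclideanSpace ℝ (Fin n) → ℝ → ℝ)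
    (hu : ∀ x t, u x t = ((c + k) / lam) * Real.exp (-lam * t) * φ x)
    (hm : ∀ x t, m x t = Real.exp (-lam * t) * φ x) :
    ∀ x ∈ Ω, ∀ t ∈ Set.Ioo (0 : ℝ) T,
      (-(deriv (fun τ => u x τ) t) - lap (fun y => u y t) x = c * m x t) ∧
      (deriv (fun τ => m x τ) t - lap (fun y => m y t) x - lap (fun y => u y t) x = 0) := by
  have hpos : 0 < β ^ 2 + c * β := by positivity
  have hlam_pos : 0 < lam := by rw [hlam]; exact Real.sqrt_pos.mpr hpos
  have hlam2 : lam ^ 2 = β ^ 2 + c * β := by rw [hlam, Real.sq_sqrt hpos.le]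
  intro x hx t ht
  have hlapφ : lap φ x = -(β * φ x) := by have := heig x hx; linarith
  -- time derivatives
  have hderiv_exp : HasDerivAt (fun τ : ℝ => Real.exp (-lam * τ)) (-lam * Real.exp (-lam * t)) t := by
    have h1 : HasDerivAt (fun τ : ℝ => -lam * τ) (-lam) t := by
      simpa using (hasDerivAt_id t).const_mul (-lam)
    simpa [mul_comm] using h1.exp
  have hderiv_m : deriv (fun τ => m x τ) t = -lam * Real.exp (-lam * t) * φ x := by
    have : HasDerivAt (fun τ => m x τ) (-lam * Real.exp (-lam * t) * φ x) t := by
      simp only [hm]; exact hderiv_exp.mul_const (φ x)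
    exact this.deriv
  have hderiv_u : deriv (fun τ => u x τ) t
      = ((c + k) / lam) * (-lam * Real.exp (-lam * t)) * φ x := by
    have : HasDerivAt (fun τ => u x τ)
        (((c + k) / lam) * (-lam * Real.exp (-lam * t)) * φ x) t := by
      simp only [hu]
      exact ((hderiv_exp.const_mul ((c + k) / lam)).mul_const (φ x))
    exact this.deriv
  -- spatial laplacians
  have hlap_m : lap (fun y => m y t) x = Real.exp (-lam * t) * lap φ x := by
    simp only [hm]; exact lap_const_mul _ φ hφ x
  have hlap_u : lap (fun y => u y t) x
      = ((c + k) / lam) * Real.exp (-lam * t) * lap φ x := by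
    have hfun : (fun y => u y t) = fun y => ((c + k) / lam * Real.exp (-lam * t)) * φ y := by
      funext y; rw [hu]
    rw [hfun, lap_const_mul _ φ hφ x]
  have hE : Real.exp (-lam * t) ≠ 0 := Real.exp_ne_zero _
  have hkey1 : (c + k) * (lam + β) = c * lam := by rw [hk]; nlinarith [hlam2]
  have hkey2 : k * lam + (c + k) * β = 0 := by rw [hk]; nlinarith [hlam2]
  constructor
  · rw [hderiv_u, hlap_u, hm, hlapφ]
    simp only [neg_mul]
    field_simp
    linear_combination (φ x) * hkey1
  · rw [hderiv_m, hlap_m, hlap_u, hlapφ]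
    simp only [neg_mul]
    field_simp
    linear_combination (Real.exp (-(lam * t)) * φ x) * hkey2 + (-lam * Real.exp (-(lam * t)) * φ x) * hk
end

section
/- Let λ > 0, D ≤ 0, T > 0. Then ∫₀^T (−λ·e^{−λt} + D·e^{λt})·(−λ·e^{−λ(T−t)} + D·e^{λ(T−t)}) dt > 0. -/
lemma neg_mul_exp_add_mul_exp_neg {lam D : ℝ} (hlam : 0 < lam) (hD : D ≤ 0) (s : ℝ) :
    -lam * Real.exp (-lam * s) + D * Real.exp (lam * s) < 0 := by
  have hdecay : 0 < lam * Real.exp (-lam * s) := mul_pos hlam (Real.exp_pos _)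
  have hgrowth : D * Real.exp (lam * s) ≤ 0 := mul_nonpos_of_nonpos_of_nonneg hD (Real.exp_pos _).le
  linarith

theorem stmt5 (lam D T : ℝ) (hlam : 0 < lam) (hD : D ≤ 0) (hT : 0 < T) :
    0 < ∫ t in (0 : ℝ)..T,
        (-lam * Real.exp (-lam * t) + D * Real.exp (lam * t)) *
          (-lam * Real.exp (-lam * (T - t)) + D * Real.exp (lam * (T - t))) := by
  refine intervalIntegral.intervalIntegral_pos_of_pos_on ?_ (fun t _ => ?_) hT
  · exact Continuous.intervalIntegrable (by fun_prop) _ _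
  · exact mul_pos_of_neg_of_neg (neg_mul_exp_add_mul_exp_neg hlam hD t)
      (neg_mul_exp_add_mul_exp_neg hlam hD (T - t))
end
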